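/- arXiv:1001.0023 — 8 statements merged into one kernel-verified Lean document; each statement's English description precedes it below -/
import Mathlib

section
/- Fix p ∈ ℝ^n. Let I_p denote the ideal of C∞(ℝ^n) consisting of all f that vanish identically on some neighbourhood of p, and let S_p denote the multiplicative submonoid {g ∈ C∞(ℝ^n) : g(p) ≠ 0}. Then the quotient map C∞(ℝ^n) → C∞(ℝ^n)/I_p exhibits C∞(ℝ^n)/I_p as the localization of C∞(ℝ^n) at S_p (i.e. the quotient algebra satisfies the IsLocalization predicate with respect to S_p). -/
/-!
A quotient `R ⧸ I` is the localization of `R` at `S` as soon as every element of `S` is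
invertible modulo `I` and every element of `I` is killed by an element of `S`. Both follow
from bump functions. If `g(p) ≠ 0`, then `χ / g`, with `χ` a bump equal to `1` near `p` and
supported where `g ≠ 0`, is a global smooth function inverse to `g` near `p`. If `f` vanishes
on a neighbourhood of `p`, a bump supported there with value `1` at `p` lies in `S_p` and
annihilates `f`.
-/

noncomputable section

/-- The `ℝ`-algebra `C∞(ℝ^n)` of smooth functions `ℝ^n → ℝ`. -/
def SmoothAlg (n : ℕ) : Subalgebra ℝ ((Fin n → ℝ) → ℝ) where
  carrier := {f | ContDiff ℝ (⊤ : ℕ∞) f}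
  mul_mem' := fun {f g} hf hg => by
    simp only [Set.mem_setOf_eq] at *; exact hf.mul hg
  one_mem' := by simp only [Set.mem_setOf_eq]; exact contDiff_const
  add_mem' := fun {f g} hf hg => by
    simp only [Set.mem_setOf_eq] at *; exact hf.add hg
  zero_mem' := by simp only [Set.mem_setOf_eq]; exact contDiff_const
  algebraMap_mem' := fun r => by
    simp only [Set.mem_setOf_eq]; exact contDiff_const


/-- The ideal `I_p` of smooth functions vanishing identically near `p`. -/
def germIdeal (n : ℕ) (p : Fin n → ℝ) : Ideal (SmoothAlg n) where
  carrier := {f | ∀ᶠ x in nhds p, (f : (Fin n → ℝ) → ℝ) x = 0}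
  add_mem' := fun {f g} hf hg => by
    simp only [Set.mem_setOf_eq] at *
    filter_upwards [hf, hg] with x hfx hgx
    show (f : (Fin n → ℝ) → ℝ) x + (g : (Fin n → ℝ) → ℝ) x = 0
    rw [hfx, hgx, add_zero]
  zero_mem' := by
    simp only [Set.mem_setOf_eq]
    exact Filter.Eventually.of_forall fun x => rfl
  smul_mem' := fun c f hf => by
    simp only [Set.mem_setOf_eq] at *
    filter_upwards [hf] with x hfx
    show (c : (Fin n → ℝ) → ℝ) x * (f : (Fin n → ℝ) → ℝ) x = 0
    rw [hfx, mul_zero]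

/-- The multiplicative submonoid `S_p` of smooth functions nonvanishing at `p`. -/
def evalSubmonoid (n : ℕ) (p : Fin n → ℝ) : Submonoid (SmoothAlg n) where
  carrier := {g | (g : (Fin n → ℝ) → ℝ) p ≠ 0}
  mul_mem' := fun {a b} ha hb => by
    simp only [Set.mem_setOf_eq] at *
    show (a : (Fin n → ℝ) → ℝ) p * (b : (Fin n → ℝ) → ℝ) p ≠ 0
    exact mul_ne_zero ha hb
  one_mem' := by
    simp only [Set.mem_setOf_eq]
    show (1 : ℝ) ≠ 0
    exact one_ne_zero

open Filter Topology Metric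

theorem Ideal.Quotient.isLocalization_of {R : Type*} [CommRing R] {M : Submonoid R}
    {I : Ideal R} (exists_mul_eq_one : ∀ m ∈ M, ∃ b, Ideal.Quotient.mk I (m * b) = 1)
    (exists_mul_eq_zero : ∀ a ∈ I, ∃ m ∈ M, m * a = 0) : IsLocalization M (R ⧸ I) where
  map_units m := by
    obtain ⟨b, hb⟩ := exists_mul_eq_one m m.2
    exact .of_mul_eq_one (Ideal.Quotient.mk I b) ((map_mul _ _ _).symm.trans hb)
  surj z := by
    obtain ⟨a, rfl⟩ := Ideal.Quotient.mk_surjective z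
    exact ⟨(a, 1), by simp⟩
  exists_of_eq {a b} hab := by
    obtain ⟨m, hm, hma⟩ := exists_mul_eq_zero (a - b) (Ideal.Quotient.eq.mp hab)
    exact ⟨⟨m, hm⟩, by simpa [mul_sub, sub_eq_zero] using hma⟩

theorem contDiff_of_contDiffAt_tsupport {𝕜 E F : Type*} [NontriviallyNormedField 𝕜]
    [NormedAddCommGroup E] [NormedSpace 𝕜 E] [NormedAddCommGroup F] [NormedSpace 𝕜 F]
    {n : WithTop ℕ∞} {f : E → F} (hf : ∀ x ∈ tsupport f, ContDiffAt 𝕜 n f x) :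
    ContDiff 𝕜 n f :=
  contDiff_iff_contDiffAt.mpr fun x ↦ by
    by_cases hx : x ∈ tsupport f
    · exact hf x hx
    · exact contDiffAt_const.congr_of_eventuallyEq (notMem_tsupport_iff_eventuallyEq.mp hx)

section BumpFunctions

variable {E : Type*} [NormedAddCommGroup E] [NormedSpace ℝ E] [HasContDiffBump E]
  {k : ℕ∞} {p : E}

theorem exists_contDiff_eventuallyEq_one_tsupport_subset {s : Set E} (hs : s ∈ 𝓝 p) :
    ∃ χ : E → ℝ, ContDiff ℝ k χ ∧ χ =ᶠ[𝓝 p] 1 ∧ tsupport χ ⊆ s := by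
  obtain ⟨ε, hε, hball⟩ := Metric.mem_nhds_iff.mp hs
  let χ : ContDiffBump p := ⟨ε / 3, ε / 2, by positivity, by linarith⟩
  refine ⟨χ, χ.contDiff, χ.eventuallyEq_one, ?_⟩
  rw [χ.tsupport_eq]
  exact (closedBall_subset_ball (show ε / 2 < ε by linarith)).trans hball

theorem ContDiff.exists_contDiff_mul_eventuallyEq_one {g : E → ℝ} (hg : ContDiff ℝ k g)
    (hgp : g p ≠ 0) : ∃ h : E → ℝ, ContDiff ℝ k h ∧ h * g =ᶠ[𝓝 p] 1 := by
  have hne : ∀ᶠ x in 𝓝 p, g x ≠ 0 := hg.continuous.continuousAt.eventually_ne hgp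
  obtain ⟨χ, hχ, hχ_one, hχ_supp⟩ := exists_contDiff_eventuallyEq_one_tsupport_subset (k := k) hne
  refine ⟨χ * g⁻¹, contDiff_of_contDiffAt_tsupport fun x hx ↦ ?_, ?_⟩
  · have hgx : g x ≠ 0 := hχ_supp (tsupport_mul_subset_left hx)
    exact hχ.contDiffAt.mul (hg.contDiffAt.inv hgx)
  · filter_upwards [hχ_one, hne] with x hχx hgx
    simp [hχx, inv_mul_cancel₀ hgx]

theorem exists_contDiff_mul_eq_zero_of_eventuallyEq_zero {f : E → ℝ} (hf : f =ᶠ[𝓝 p] 0) :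
    ∃ χ : E → ℝ, ContDiff ℝ k χ ∧ χ p ≠ 0 ∧ χ * f = 0 := by
  obtain ⟨χ, hχ, hχ_one, hχ_supp⟩ := exists_contDiff_eventuallyEq_one_tsupport_subset (k := k) hf
  refine ⟨χ, hχ, by simp [hχ_one.eq_of_nhds], funext fun x ↦ ?_⟩
  by_cases hx : x ∈ tsupport χ
  · simp [show f x = 0 from hχ_supp hx]
  · simp [image_eq_zero_of_notMem_tsupport hx]

end BumpFunctions

theorem mem_smoothAlg {n : ℕ} {f : (Fin n → ℝ) → ℝ} :
    f ∈ SmoothAlg n ↔ ContDiff ℝ (⊤ : ℕ∞) f :=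
  Iff.rfl

theorem germIdeal_mk_eq_mk_iff {n : ℕ} {p : Fin n → ℝ} {f g : SmoothAlg n} :
    Ideal.Quotient.mk (germIdeal n p) f = Ideal.Quotient.mk (germIdeal n p) g ↔
      (f : (Fin n → ℝ) → ℝ) =ᶠ[𝓝 p] g := by
  rw [Ideal.Quotient.eq]
  exact eventually_congr (.of_forall fun x ↦ sub_eq_zero)

/-- The ring of germs at `p`, i.e. the quotient `C^∞(ℝ^n)/I_p`, is the localization of
`C^∞(ℝ^n)` at the multiplicative set `S_p = {g : g(p) ≠ 0}`. -/
theorem germ_quotient_isLocalization (n : ℕ) (p : Fin n → ℝ) :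
    IsLocalization (evalSubmonoid n p) (SmoothAlg n ⧸ germIdeal n p) := by
  refine Ideal.Quotient.isLocalization_of (fun g hg ↦ ?_) (fun f hf ↦ ?_)
  · obtain ⟨h, hh, hhg⟩ := (mem_smoothAlg.mp g.2).exists_contDiff_mul_eventuallyEq_one hg
    refine ⟨⟨h, mem_smoothAlg.mpr hh⟩, ?_⟩
    rw [← map_one (Ideal.Quotient.mk _), germIdeal_mk_eq_mk_iff]
    simpa [mul_comm] using hhg
  · obtain ⟨χ, hχ, hχp, hχf⟩ := exists_contDiff_mul_eq_zero_of_eventuallyEq_zero hf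
    exact ⟨⟨χ, mem_smoothAlg.mpr hχ⟩, hχp, Subtype.ext hχf⟩
end
end

section
/- Every finitely generated ideal of C∞(ℝ^n) is germ-determined. That is, if I ⊆ C∞(ℝ^n) is an ideal generated by finitely many elements g_1,…,g_k, and f ∈ C∞(ℝ^n) has the property that for every p ∈ ℝ^n there exists g ∈ I with f = g on some neighbourhood of p, then f ∈ I. -/
/-!
The coefficient vectors `c` with `f x = ∑ i, c i * g i x` form an affine, hence convex, subset
of `ι → ℝ` at each point `x`. Local smooth choices of such vectors therefore glue, via a smooth
partition of unity, to a global smooth choice.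
-/

noncomputable section

open Manifold Filter Topology

theorem exists_contDiff_coeffs_of_local {E ι : Type*} [NormedAddCommGroup E]
    [NormedSpace ℝ E] [FiniteDimensional ℝ E] [Fintype ι] {n : ℕ∞} {f : E → ℝ} {g : ι → E → ℝ}
    (hloc : ∀ p, ∃ a : ι → E → ℝ, (∀ i, ContDiff ℝ n (a i)) ∧ f =ᶠ[𝓝 p] ∑ i, a i * g i) :
    ∃ c : ι → E → ℝ, (∀ i, ContDiff ℝ n (c i)) ∧ f = ∑ i, c i * g i := by
  have hconv : ∀ x, Convex ℝ {v : ι → ℝ | ∑ i, v i * g i x = f x} := fun x =>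
    convex_hyperplane ⟨fun v w => by simp [add_mul, Finset.sum_add_distrib],
      fun r v => by simp [mul_assoc, Finset.mul_sum]⟩ _
  obtain ⟨c, hc⟩ := exists_contMDiffMap_forall_mem_convex_of_local 𝓘(ℝ, E) (n := n) hconv
    fun p => by
      obtain ⟨a, ha, hfa⟩ := hloc p
      refine ⟨_, hfa, fun y i => a i y, (contDiff_pi.2 ha).contMDiff.contMDiffOn, fun y hy => ?_⟩
      simpa using hy.symm
  refine ⟨fun i x => c x i, fun i => contDiff_pi.1 (contMDiff_iff_contDiff.1 c.contMDiff) i, ?_⟩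
  funext x
  simpa using (hc x).symm

theorem SmoothAlg.mem_span_range_iff {n : ℕ} {ι : Type*} [Fintype ι] (g : ι → SmoothAlg n)
    (f : SmoothAlg n) :
    f ∈ Ideal.span (Set.range g) ↔ ∃ c : ι → (Fin n → ℝ) → ℝ,
      (∀ i, ContDiff ℝ (⊤ : ℕ∞) (c i)) ∧ (f : (Fin n → ℝ) → ℝ) = ∑ i, c i * g i := by
  rw [Ideal.mem_span_range_iff_exists_fun]
  constructor
  · rintro ⟨a, rfl⟩
    exact ⟨fun i => a i, fun i => (a i).2, by simp⟩
  · rintro ⟨c, hc, hf⟩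
    exact ⟨fun i => ⟨c i, hc i⟩, Subtype.ext (by simp [hf])⟩

/-- Every finitely generated ideal of `C^∞(ℝ^n)` is germ-determined: if `f` agrees near each
point of `ℝ^n` with some element of the ideal generated by `g 0, …, g (k-1)`, then `f` lies
in that ideal. -/
theorem finitely_generated_ideal_germ_determined (n k : ℕ) (g : Fin k → SmoothAlg n)
    (f : SmoothAlg n)
    (hf : ∀ p : Fin n → ℝ, ∃ h ∈ Ideal.span (Set.range g),
        ∀ᶠ x in nhds p, (f : (Fin n → ℝ) → ℝ) x = (h : (Fin n → ℝ) → ℝ) x) :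
    f ∈ Ideal.span (Set.range g) := by
  refine (SmoothAlg.mem_span_range_iff g f).2 (exists_contDiff_coeffs_of_local fun p => ?_)
  obtain ⟨h, hh, hfh⟩ := hf p
  obtain ⟨a, ha, hha⟩ := (SmoothAlg.mem_span_range_iff g h).1 hh
  exact ⟨a, ha, hha ▸ hfh⟩
end
end

section
/- Let X ⊆ ℝ^n be a closed subset and g_1,…,g_k ∈ C∞(ℝ^n). Then the ideal of C∞(ℝ^n) generated by g_1,…,g_k together with m_X^∞ (i.e. the sum of the ideal (g_1,…,g_k) and the ideal m_X^∞) is germ-determined. -/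
noncomputable section

/-- `FlatOn n X f` says `f ∈ m_X^∞`: all iterated derivatives of `f` vanish at every point
of `X`. -/
def FlatOn (n : ℕ) (X : Set (Fin n → ℝ)) (f : SmoothAlg n) : Prop :=
  ∀ (k : ℕ), ∀ x ∈ X, iteratedFDeriv ℝ k (f : (Fin n → ℝ) → ℝ) x = 0

/-! If `f` agrees near every point `p` with some `h p` of an ideal `I`, take a smooth partition of
unity `ρ` subordinate to these neighbourhoods: then `f = ∑ᶠ p, ρ p * h p`. So it suffices that `I`
is closed under such locally finite gluings. For `(g₁, …, g_k)` this holds because there are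
finitely many generators, so the coefficients of each `gᵢ` can be glued separately; for `m_X^∞`
because flatness at a point depends only on the germ, and near any point the glued sum is a finite
sum of multiples of flat functions. -/

open Set Function
open scoped Manifold ContDiff Topology

theorem iteratedFDeriv_mul_eq_zero_of_flat {𝕜 E A : Type*} [NontriviallyNormedField 𝕜]
    [NormedAddCommGroup E] [NormedSpace 𝕜 E] [NormedRing A] [NormedAlgebra 𝕜 A]
    {a m : E → A} {x : E} {j : ℕ} (ha : ContDiff 𝕜 j a) (hm : ContDiff 𝕜 j m)
    (hflat : ∀ i ≤ j, iteratedFDeriv 𝕜 i m x = 0) :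
    iteratedFDeriv 𝕜 j (fun y => a y * m y) x = 0 := by
  rw [← norm_le_zero_iff]
  refine (norm_iteratedFDeriv_mul_le ha hm x le_rfl).trans_eq (Finset.sum_eq_zero fun i _ => ?_)
  rw [hflat (j - i) (Nat.sub_le j i), norm_zero, mul_zero]

namespace SmoothAlg

variable {n : ℕ}

instance : CoeFun (SmoothAlg n) fun _ => (Fin n → ℝ) → ℝ := ⟨Subtype.val⟩

theorem contDiff_coe (f : SmoothAlg n) : ContDiff ℝ ∞ f := f.2

@[ext]
theorem ext {f g : SmoothAlg n} (h : ∀ x, f x = g x) : f = g := Subtype.ext (funext h)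

def flatIdeal (n : ℕ) (X : Set (Fin n → ℝ)) : Ideal (SmoothAlg n) where
  carrier := {f | FlatOn n X f}
  zero_mem' j x _ := congrFun iteratedFDeriv_fun_zero x
  add_mem' {f g} hf hg j x hx := by
    change iteratedFDeriv ℝ j (fun y => f y + g y) x = 0
    rw [fun_iteratedFDeriv_add_apply (contDiff_infty.mp (contDiff_coe f) _).contDiffAt
      (contDiff_infty.mp (contDiff_coe g) _).contDiffAt, hf j x hx, hg j x hx, add_zero]
  smul_mem' a m hm j x hx :=
    iteratedFDeriv_mul_eq_zero_of_flat (contDiff_infty.mp (contDiff_coe a) _)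
      (contDiff_infty.mp (contDiff_coe m) _) fun i _ => hm i x hx

theorem span_setOf_flatOn (X : Set (Fin n → ℝ)) :
    Ideal.span {f : SmoothAlg n | FlatOn n X f} = flatIdeal n X :=
  Ideal.span_eq (flatIdeal n X)

theorem flatOn_of_forall_eventuallyEq {X : Set (Fin n → ℝ)} {f : SmoothAlg n}
    (hf : ∀ x ∈ X, ∃ m ∈ flatIdeal n X, f =ᶠ[𝓝 x] m) : FlatOn n X f := by
  intro j x hx
  obtain ⟨m, hm, hfm⟩ := hf x hx
  rw [(hfm.iteratedFDeriv ℝ j).eq_of_nhds]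
  exact hm j x hx

section Glue

variable {ι : Type*} (ρ : SmoothPartitionOfUnity ι 𝓘(ℝ, Fin n → ℝ) (Fin n → ℝ) univ)

def glue : (ι → SmoothAlg n) →ₗ[SmoothAlg n] SmoothAlg n where
  toFun h := ⟨fun x => ∑ᶠ i, ρ i x • h i x,
    contMDiff_iff_contDiff.mp (ρ.contMDiff_finsum_smul fun i x _ =>
      (contDiff_coe (h i)).contMDiff.contMDiffAt)⟩
  map_add' h h' := by
    ext x
    change ∑ᶠ i, ρ i x • (h i x + h' i x) = ∑ᶠ i, ρ i x • h i x + ∑ᶠ i, ρ i x • h' i x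
    have hfin (φ : ι → SmoothAlg n) : (support fun i => ρ i x • φ i x).Finite :=
      (ρ.locallyFinite.point_finite x).subset fun _ hi => left_ne_zero_of_mul hi
    simp only [smul_add]
    exact finsum_add_distrib (hfin h) (hfin h')
  map_smul' a h := by
    ext x
    change ∑ᶠ i, ρ i x • (a x * h i x) = a x * ∑ᶠ i, ρ i x • h i x
    rw [mul_finsum]
    simp only [smul_eq_mul, mul_left_comm]

theorem glue_apply (h : ι → SmoothAlg n) (x : Fin n → ℝ) :
    (glue ρ h) x = ∑ i ∈ ρ.finsupport x, ρ i x * h i x :=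
  (ρ.sum_finsupport_smul_eq_finsum _ _).symm

end Glue

def GlueClosed (I : Ideal (SmoothAlg n)) : Prop :=
  ∀ ⦃ι : Type⦄ (ρ : SmoothPartitionOfUnity ι 𝓘(ℝ, Fin n → ℝ) (Fin n → ℝ) univ)
    (h : ι → SmoothAlg n), (∀ i, h i ∈ I) → glue ρ h ∈ I

theorem GlueClosed.sup {I J : Ideal (SmoothAlg n)} (hI : GlueClosed I) (hJ : GlueClosed J) :
    GlueClosed (I ⊔ J) := by
  intro ι ρ h hh
  choose a ha b hb hab using fun i => Submodule.mem_sup.mp (hh i)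
  rw [show h = a + b from funext fun i => (hab i).symm, map_add]
  exact Submodule.add_mem_sup (hI ρ a ha) (hJ ρ b hb)

theorem glueClosed_span_range {κ : Type*} [Fintype κ] (g : κ → SmoothAlg n) :
    GlueClosed (Ideal.span (range g)) := by
  intro ι ρ h hh
  choose c hc using fun i => Ideal.mem_span_range_iff_exists_fun.mp (hh i)
  have hsum : h = ∑ j, g j • fun i => c i j := by
    ext i x
    simp only [← hc i, Finset.sum_apply, Pi.smul_apply, smul_eq_mul, mul_comm]
  rw [hsum, map_sum]
  exact Ideal.sum_mem _ fun j _ => by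
    rw [map_smul]; exact Ideal.mul_mem_right _ _ (Ideal.subset_span (mem_range_self j))

theorem glueClosed_flatIdeal (X : Set (Fin n → ℝ)) : GlueClosed (flatIdeal n X) := by
  intro ι ρ h hh
  refine flatOn_of_forall_eventuallyEq fun x _ =>
    ⟨∑ i ∈ ρ.fintsupport x, ⟨ρ i, (ρ i).contMDiff.contDiff⟩ * h i,
      Ideal.sum_mem _ fun i _ => Ideal.mul_mem_left _ _ (hh i), ?_⟩
  filter_upwards [ρ.eventually_finsupport_subset x] with y hy
  simp only [glue_apply, AddSubmonoidClass.coe_finsetSum, Finset.sum_apply]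
  exact Finset.sum_subset hy fun i _ hi => mul_eq_zero_of_left (by simpa using hi) _

theorem GlueClosed.mem_of_forall_eventuallyEq {I : Ideal (SmoothAlg n)} (hI : GlueClosed I)
    {f : SmoothAlg n} (hf : ∀ p : Fin n → ℝ, ∃ h ∈ I, ∀ᶠ x in 𝓝 p, f x = h x) : f ∈ I := by
  choose h hhI hfh using hf
  obtain ⟨ρ, hρ⟩ := SmoothPartitionOfUnity.exists_isSubordinate 𝓘(ℝ, Fin n → ℝ) isClosed_univ
    (fun p => interior {x | f x = h p x}) (fun _ => isOpen_interior)
    fun p _ => mem_iUnion.mpr ⟨p, mem_interior_iff_mem_nhds.mpr (hfh p)⟩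
  suffices glue ρ h = f from this ▸ hI ρ h hhI
  ext x
  have hρh : ∀ i ∈ ρ.finsupport x, h i x = f x := fun i hi =>
    (interior_subset (hρ i (subset_tsupport _ ((ρ.mem_finsupport x).mp hi)))).symm
  rw [glue_apply, Finset.sum_congr rfl fun i hi => by rw [hρh i hi], ← Finset.sum_mul,
    ρ.sum_finsupport x (mem_univ x), one_mul]

end SmoothAlg

theorem good_ideal_germ_determined_general (n k : ℕ) (X : Set (Fin n → ℝ))
    (g : Fin k → SmoothAlg n) (f : SmoothAlg n)
    (hf : ∀ p : Fin n → ℝ,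
        ∃ h ∈ Ideal.span (Set.range g ∪ {h : SmoothAlg n | FlatOn n X h}),
          ∀ᶠ x in nhds p, (f : (Fin n → ℝ) → ℝ) x = (h : (Fin n → ℝ) → ℝ) x) :
    f ∈ Ideal.span (Set.range g ∪ {h : SmoothAlg n | FlatOn n X h}) := by
  have hglue : SmoothAlg.GlueClosed (Ideal.span (Set.range g ∪ {h | FlatOn n X h})) := by
    rw [Ideal.span_union, SmoothAlg.span_setOf_flatOn]
    exact (SmoothAlg.glueClosed_span_range g).sup (SmoothAlg.glueClosed_flatIdeal X)
  exact hglue.mem_of_forall_eventuallyEq hf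

/-- For closed `X ⊆ ℝ^n` and `g 0, …, g (k-1) ∈ C^∞(ℝ^n)`, the ("good") ideal generated by
`g 0, …, g (k-1)` together with `m_X^∞` is germ-determined. -/
theorem good_ideal_germ_determined (n k : ℕ) (X : Set (Fin n → ℝ)) (hX : IsClosed X)
    (g : Fin k → SmoothAlg n) (f : SmoothAlg n)
    (hf : ∀ p : Fin n → ℝ,
        ∃ h ∈ Ideal.span (Set.range g ∪ {h : SmoothAlg n | FlatOn n X h}),
          ∀ᶠ x in nhds p, (f : (Fin n → ℝ) → ℝ) x = (h : (Fin n → ℝ) → ℝ) x) :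
    f ∈ Ideal.span (Set.range g ∪ {h : SmoothAlg n | FlatOn n X h}) :=
  good_ideal_germ_determined_general n k X g f hf
end
end

section
/- An ideal I of C∞(ℝ^n) is germ-determined if and only if it is closed under locally finite sums; that is, if and only if for every locally finite family (c_a)_{a∈A} of elements of I, the pointwise sum c : ℝ^n → ℝ, c(x) = Σ_{a∈A} c_a(x) (which is a well-defined smooth function, since near every point only finitely many terms are nonzero), again belongs to I. -/
noncomputable section

/-- An ideal `I` of `C^∞(ℝ^n)` is germ-determined: any `f` agreeing with an element of `I`
near each point of `ℝ^n` lies in `I`. -/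
def GermDetermined (n : ℕ) (I : Ideal (SmoothAlg n)) : Prop :=
  ∀ f : SmoothAlg n,
    (∀ p : Fin n → ℝ, ∃ g ∈ I,
        ∀ᶠ x in nhds p, (f : (Fin n → ℝ) → ℝ) x = (g : (Fin n → ℝ) → ℝ) x) →
    f ∈ I


/-!
A locally finite sum of elements of `I` agrees near each point with a finite sub-sum, which lies
in `I`; so a germ-determined ideal contains it. Conversely, if `f` agrees near each point `p`
with some `g p ∈ I` on an open set `V p`, choose a smooth partition of unity `ρ` subordinate to
`V`. Then `ρ p * g p = ρ p * f` everywhere, so `f = ∑ᶠ p, ρ p * g p` is a locally finite sum of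
elements of `I`.
-/

open Set Filter Function Topology
open scoped Manifold ContDiff

theorem locallyFinite_support_iff_exists_nhds {A X M : Type*} [TopologicalSpace X] [Zero M]
    (c : A → X → M) :
    LocallyFinite (fun a => support (c a)) ↔
      ∀ p, ∃ U ∈ 𝓝 p, {a | ¬ ∀ x ∈ U, c a x = 0}.Finite := by
  refine forall_congr' fun p => exists_congr fun U => and_congr_right fun _ => ?_
  simp only [Set.Nonempty, mem_inter_iff, mem_support, not_forall, exists_prop, and_comm]

theorem mul_eq_mul_of_support_subset_of_eqOn {X R : Type*} [MulZeroClass R] {ρ f g : X → R}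
    {V : Set X} (hρ : support ρ ⊆ V) (hfg : EqOn f g V) (x : X) : ρ x * f x = ρ x * g x := by
  by_cases hx : ρ x = 0
  · simp [hx]
  · rw [hfg (hρ hx)]

namespace SmoothAlg

variable {n : ℕ}

def ofContMDiffMap (g : C^∞⟮𝓘(ℝ, Fin n → ℝ), Fin n → ℝ; 𝓘(ℝ), ℝ⟯) : SmoothAlg n :=
  ⟨g, contMDiff_iff_contDiff.1 g.contMDiff⟩

variable {I : Ideal (SmoothAlg n)}

theorem _root_.GermDetermined.mem_of_eq_finsum (hI : GermDetermined n I) {A : Type*}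
    {c : A → SmoothAlg n} (hcI : ∀ a, c a ∈ I)
    (hc : LocallyFinite fun a => support (c a : (Fin n → ℝ) → ℝ)) {f : SmoothAlg n}
    (hf : ∀ x, (f : (Fin n → ℝ) → ℝ) x = ∑ᶠ a, (c a : (Fin n → ℝ) → ℝ) x) : f ∈ I := by
  refine hI f fun p => ?_
  obtain ⟨s, hs⟩ := finsum_eventually_eq_sum hc p
  refine ⟨∑ a ∈ s, c a, I.sum_mem fun a _ => hcI a, ?_⟩
  filter_upwards [hs] with x hx
  simp [hf x, hx]

theorem exists_eq_finsum_of_eventuallyEq_mem {f : SmoothAlg n}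
    (hf : ∀ p, ∃ g ∈ I, ∀ᶠ x in 𝓝 p, (f : (Fin n → ℝ) → ℝ) x = (g : (Fin n → ℝ) → ℝ) x) :
    ∃ c : (Fin n → ℝ) → SmoothAlg n, (∀ a, c a ∈ I) ∧
      LocallyFinite (fun a => support (c a : (Fin n → ℝ) → ℝ)) ∧
      ∀ x, (f : (Fin n → ℝ) → ℝ) x = ∑ᶠ a, (c a : (Fin n → ℝ) → ℝ) x := by
  choose g hgI hg using hf
  choose V hfg hVo hpV using fun p => eventually_nhds_iff.1 (hg p)
  obtain ⟨ρ, hρ⟩ := SmoothPartitionOfUnity.exists_isSubordinate 𝓘(ℝ, Fin n → ℝ)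
    isClosed_univ V hVo fun p _ => mem_iUnion.2 ⟨p, hpV p⟩
  have hρg : ∀ p x, ρ p x * (g p : (Fin n → ℝ) → ℝ) x = ρ p x * (f : (Fin n → ℝ) → ℝ) x :=
    fun p => mul_eq_mul_of_support_subset_of_eqOn (subset_tsupport _ |>.trans (hρ p))
      fun x hx => (hfg p x hx).symm
  refine ⟨fun p => ofContMDiffMap (ρ p) * g p, fun p => I.mul_mem_left _ (hgI p),
    ρ.locallyFinite.subset fun p => support_mul_subset_left _ _, fun x => ?_⟩
  calc (f : (Fin n → ℝ) → ℝ) x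
      = (∑ᶠ p, ρ p x) * (f : (Fin n → ℝ) → ℝ) x := by rw [ρ.sum_eq_one (mem_univ x), one_mul]
    _ = ∑ᶠ p, ρ p x * (g p : (Fin n → ℝ) → ℝ) x := by simp only [finsum_mul, hρg]
    _ = ∑ᶠ p, ((ofContMDiffMap (ρ p) * g p : SmoothAlg n) : (Fin n → ℝ) → ℝ) x := rfl

end SmoothAlg

open SmoothAlg in
/-- An ideal of `C^∞(ℝ^n)` is germ-determined if and only if it is closed under locally
finite sums: for every locally finite family `(c a)_{a : A}` of elements of `I` (meaning each
point has a neighbourhood on which all but finitely many `c a` vanish identically), the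
pointwise sum, as a smooth function, again lies in `I`. -/
theorem germ_determined_iff_closed_under_locally_finite_sums (n : ℕ) (I : Ideal (SmoothAlg n)) :
    GermDetermined n I ↔
      ∀ (A : Type) (c : A → SmoothAlg n), (∀ a, c a ∈ I) →
        (∀ p : Fin n → ℝ, ∃ U ∈ nhds p,
            {a : A | ¬ ∀ x ∈ U, (c a : (Fin n → ℝ) → ℝ) x = 0}.Finite) →
        ∀ f : SmoothAlg n,
          (∀ x : Fin n → ℝ, (f : (Fin n → ℝ) → ℝ) x = ∑ᶠ a : A, (c a : (Fin n → ℝ) → ℝ) x) →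
          f ∈ I := by
  constructor
  · intro hI A c hcI hc f hf
    exact hI.mem_of_eq_finsum hcI ((locallyFinite_support_iff_exists_nhds _).2 hc) hf
  · intro h f hf
    obtain ⟨c, hcI, hc, hfc⟩ := exists_eq_finsum_of_eventuallyEq_mem hf
    exact h _ c hcI ((locallyFinite_support_iff_exists_nhds _).1 hc) f hfc
end
end

section
/- Let L be the ideal of C∞(ℝ²) generated by the set of functions {(x,y) ↦ g(y) : g ∈ C∞(ℝ), g vanishes identically on some neighbourhood of 0 in ℝ}. Then L is not germ-determined: there exists f ∈ C∞(ℝ²) with f ∉ L such that for every p ∈ ℝ² there exists h ∈ L with f = h on some neighbourhood of p. (For instance, any smooth f with f(x,y) = 0 if and only if |xy| ≤ 1 has these properties.) -/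
noncomputable section

/-- Generators of the ideal `L ⊆ C^∞(ℝ²)`: functions `(x,y) ↦ g(y)` where `g ∈ C^∞(ℝ)`
vanishes identically near `0`. -/
def LGens : Set (SmoothAlg 2) :=
  {F | ∃ g : SmoothAlg 1, (∀ᶠ t in nhds (0 : Fin 1 → ℝ), (g : (Fin 1 → ℝ) → ℝ) t = 0) ∧
    ∀ x : Fin 2 → ℝ, (F : (Fin 2 → ℝ) → ℝ) x = (g : (Fin 1 → ℝ) → ℝ) (fun _ => x 1)}

open Filter Topology
open scoped ContDiff

/-!
Every generator `g(y)` vanishes on a strip `|y| < ε`, and so does every element of the ideal they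
generate; a function with zero set `{|xy| ≤ 1}` does not, since `(2/y, y)` lies outside that set
for every `y ≠ 0`. Locally, however, such an `f` lies in `L`: near a point with `y = 0` it is `0`,
and near a point with `y = c ≠ 0` it equals `f · b(y)` for a bump `b` that is `1` near `c` and `0`
near `0`.
-/

def Subalgebra.eventuallyZeroIdeal {X R : Type*} [CommSemiring R] (A : Subalgebra R (X → R))
    (l : Filter X) : Ideal A where
  carrier := {h | (h : X → R) =ᶠ[l] 0}
  zero_mem' := EventuallyEq.rfl
  add_mem' {a b} ha hb := by
    filter_upwards [ha, hb] with x hax hbx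
    simp [hax, hbx]
  smul_mem' c {h} hh := by
    filter_upwards [hh] with x hx
    simp [hx]

abbrev stripNhds : Filter (Fin 2 → ℝ) := comap (fun x => x 1) (𝓝 0)

lemma span_LGens_le_eventuallyZeroIdeal :
    Ideal.span LGens ≤ (SmoothAlg 2).eventuallyZeroIdeal stripNhds := by
  rw [Ideal.span_le]
  rintro F ⟨g, hg0, hFg⟩
  have hlift : Tendsto (fun y : ℝ => (fun _ => y : Fin 1 → ℝ)) (𝓝 0) (𝓝 0) :=
    (continuous_pi fun _ => continuous_id).tendsto' 0 0 rfl
  filter_upwards [(hlift.eventually hg0).comap _] with x hx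
  exact (hFg x).trans hx

lemma not_eventually_zero_stripNhds {f : (Fin 2 → ℝ) → ℝ}
    (hf : ∀ x, f x = 0 → |x 0 * x 1| ≤ 1) : ¬ ∀ᶠ x in stripNhds, f x = 0 := by
  intro h
  have hcurve : Tendsto (fun y : ℝ => ![2 / y, y]) (𝓝[≠] 0) stripNhds :=
    tendsto_comap_iff.2 (tendsto_id'.2 nhdsWithin_le_nhds)
  obtain ⟨y, hy, hy0⟩ := ((hcurve.eventually h).and self_mem_nhdsWithin).exists
  have := hf _ hy
  simp [div_mul_cancel₀ _ hy0] at this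

lemma notMem_span_LGens {f : SmoothAlg 2}
    (hf : ∀ x, (f : (Fin 2 → ℝ) → ℝ) x = 0 → |x 0 * x 1| ≤ 1) :
    f ∉ Ideal.span LGens := fun hmem =>
  not_eventually_zero_stripNhds hf (span_LGens_le_eventuallyZeroIdeal hmem)

lemma mem_LGens_of_eventuallyEq_zero {g : ℝ → ℝ} (hg : ContDiff ℝ ∞ g) (hg0 : g =ᶠ[𝓝 0] 0) :
    (⟨fun x => g (x 1), hg.comp (contDiff_apply ℝ ℝ (1 : Fin 2))⟩ : SmoothAlg 2) ∈ LGens := by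
  refine ⟨⟨fun t => g (t 0), hg.comp (contDiff_apply ℝ ℝ (0 : Fin 1))⟩, ?_, fun x => rfl⟩
  exact ((continuous_apply (0 : Fin 1)).tendsto' (0 : Fin 1 → ℝ) 0 rfl).eventually hg0

lemma exists_contDiff_eventuallyEq_zero_one {c : ℝ} (hc : c ≠ 0) :
    ∃ g : ℝ → ℝ, ContDiff ℝ ∞ g ∧ g =ᶠ[𝓝 0] 0 ∧ g =ᶠ[𝓝 c] 1 := by
  have hc' : 0 < |c| := abs_pos.2 hc
  let b : ContDiffBump c := ⟨|c| / 4, |c| / 2, by positivity, by linarith⟩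
  refine ⟨b, b.contDiff, ?_, b.eventuallyEq_one⟩
  rw [← notMem_tsupport_iff_eventuallyEq, b.tsupport_eq]
  simp only [Metric.mem_closedBall, dist_zero_left, Real.norm_eq_abs, not_le, b]
  linarith

lemma exists_smooth_zero_iff_abs_mul_le_one :
    ∃ f : SmoothAlg 2, ∀ x, (f : (Fin 2 → ℝ) → ℝ) x = 0 ↔ |x 0 * x 1| ≤ 1 := by
  refine ⟨⟨fun x => expNegInvGlue ((x 0 * x 1) ^ 2 - 1), ?_⟩, fun x => ?_⟩
  · exact expNegInvGlue.contDiff.comp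
      (((contDiff_apply ℝ ℝ 0).mul (contDiff_apply ℝ ℝ (1 : Fin 2))).pow 2 |>.sub contDiff_const)
  · show expNegInvGlue _ = 0 ↔ _
    rw [expNegInvGlue.zero_iff_nonpos, sub_nonpos, sq_le_one_iff_abs_le_one]

lemma exists_mem_span_LGens_eventuallyEq {f : SmoothAlg 2}
    (hf : ∀ x, |x 0 * x 1| ≤ 1 → (f : (Fin 2 → ℝ) → ℝ) x = 0) (p : Fin 2 → ℝ) :
    ∃ h ∈ Ideal.span LGens, ∀ᶠ x in 𝓝 p, (f : (Fin 2 → ℝ) → ℝ) x = (h : (Fin 2 → ℝ) → ℝ) x := by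
  by_cases hp : p 1 = 0
  · refine ⟨0, zero_mem _, ?_⟩
    have hsmall : ∀ᶠ x in 𝓝 p, |x 0 * x 1| < 1 :=
      (Continuous.tendsto (by fun_prop) p).eventually_lt_const (by simp [hp])
    filter_upwards [hsmall] with x hx
    exact hf x hx.le
  · obtain ⟨g, hg, hg0, hg1⟩ := exists_contDiff_eventuallyEq_zero_one hp
    have hG := Ideal.subset_span (mem_LGens_of_eventuallyEq_zero hg hg0)
    refine ⟨f * _, Ideal.mul_mem_left _ f hG, ?_⟩
    filter_upwards [((continuous_apply 1).tendsto p).eventually hg1] with x hx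
    show _ = _ * g (x 1)
    simp [hx]

/-- The ideal `L` of `C^∞(ℝ²)` generated by the functions `(x,y) ↦ g(y)`, `g` vanishing near
`0`, is not germ-determined: there is `f ∉ L` which agrees with an element of `L` near every
point; indeed any smooth `f` with `f(x,y) = 0 ↔ |xy| ≤ 1` is such a function. -/
theorem span_LGens_not_germ_determined :
    (∃ f : SmoothAlg 2, f ∉ Ideal.span LGens ∧
        ∀ p : Fin 2 → ℝ, ∃ h ∈ Ideal.span LGens,
          ∀ᶠ x in nhds p, (f : (Fin 2 → ℝ) → ℝ) x = (h : (Fin 2 → ℝ) → ℝ) x) ∧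
    ∀ f : SmoothAlg 2, (∀ x : Fin 2 → ℝ, (f : (Fin 2 → ℝ) → ℝ) x = 0 ↔ |x 0 * x 1| ≤ 1) →
      f ∉ Ideal.span LGens ∧
        ∀ p : Fin 2 → ℝ, ∃ h ∈ Ideal.span LGens,
          ∀ᶠ x in nhds p, (f : (Fin 2 → ℝ) → ℝ) x = (h : (Fin 2 → ℝ) → ℝ) x := by
  refine ⟨?_, fun f hf =>
    ⟨notMem_span_LGens fun x => (hf x).1, exists_mem_span_LGens_eventuallyEq fun x => (hf x).2⟩⟩
  obtain ⟨F, hF⟩ := exists_smooth_zero_iff_abs_mul_le_one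
  exact ⟨F, notMem_span_LGens fun x => (hF x).1,
    exists_mem_span_LGens_eventuallyEq fun x => (hF x).2⟩
end
end

section
/- Let η : ℝ → ℝ be a smooth function with η(x) > 0 for x ∈ (0,1) and η(x) = 0 for x ∉ (0,1), and let I be the ideal of C∞(ℝ) generated by the translates x ↦ η(x − a) for a ∈ ℤ (so I consists of the finite sums Σ_{a∈A} g_a(x) η(x−a) with A ⊂ ℤ finite and g_a ∈ C∞(ℝ)). Then the pointwise sum f(x) = Σ_{a∈ℤ} η(x − a) defines a smooth function on ℝ which does not lie in I, although for every p ∈ ℝ there exists h ∈ I with f = h on some neighbourhood of p. Hence I is not germ-determined. -/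
/-!
Since `η` is supported in `(0,1)`, at each `x` only the translate by `⌊x⌋` survives, so the sum is
`η ∘ Int.fract`. Near a point `p` this agrees with the sum of the translates by `⌊p⌋ - 1` and `⌊p⌋`,
which gives both smoothness and local membership in the ideal. Globally it is not in the ideal:
every translate, hence every element of the ideal, vanishes near `+∞`, whereas the 1-periodic
function `η ∘ Int.fract` does not.
-/

noncomputable section

/-- The `ℝ`-algebra `C∞(ℝ)` of smooth functions `ℝ → ℝ`. -/
def SmoothR : Subalgebra ℝ (ℝ → ℝ) where
  carrier := {f | ContDiff ℝ (⊤ : ℕ∞) f}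
  mul_mem' := fun {f g} hf hg => by
    simp only [Set.mem_setOf_eq] at *; exact hf.mul hg
  one_mem' := by simp only [Set.mem_setOf_eq]; exact contDiff_const
  add_mem' := fun {f g} hf hg => by
    simp only [Set.mem_setOf_eq] at *; exact hf.add hg
  zero_mem' := by simp only [Set.mem_setOf_eq]; exact contDiff_const
  algebraMap_mem' := fun r => by
    simp only [Set.mem_setOf_eq]; exact contDiff_const

open Filter Set Topology

namespace Subalgebra

variable {X 𝕜 : Type*} [CommRing 𝕜] (A : Subalgebra 𝕜 (X → 𝕜)) (l : Filter X)

def eventuallyZeroIdeal_s10 : Ideal A where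
  carrier := {f | ∀ᶠ x in l, (f : X → 𝕜) x = 0}
  add_mem' hf hg := by filter_upwards [hf, hg] with x hfx hgx; simp [hfx, hgx]
  zero_mem' := by simp
  smul_mem' c f hf := by filter_upwards [hf] with x hfx; simp [hfx]

variable {A l} in
theorem mem_eventuallyZeroIdeal {f : A} :
    f ∈ A.eventuallyZeroIdeal_s10 l ↔ ∀ᶠ x in l, (f : X → 𝕜) x = 0 :=
  Iff.rfl

end Subalgebra

theorem Function.Periodic.frequently_ne_zero_atTop {M : Type*} [Zero M] {f : ℝ → M}
    {c t : ℝ} (hf : Function.Periodic f c) (hc : 0 < c) (ht : f t ≠ 0) :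
    ∃ᶠ x in atTop, f x ≠ 0 := by
  have h_tendsto : Tendsto (fun n : ℕ => t + n * c) atTop atTop :=
    tendsto_atTop_add_const_left _ _ (tendsto_natCast_atTop_atTop.atTop_mul_const hc)
  refine h_tendsto.frequently (Frequently.of_forall fun n => ?_)
  rwa [hf.nat_mul n t]

section Translates

variable {η : ℝ → ℝ} (hη₀ : ∀ x ∉ Ioo (0 : ℝ) 1, η x = 0)
include hη₀

theorem translate_eq_zero_of_ne_floor {x : ℝ} {a : ℤ} (ha : a ≠ ⌊x⌋) : η (x - a) = 0 := by
  refine hη₀ _ fun hx => ha ?_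
  rw [eq_comm, Int.floor_eq_iff]
  constructor <;> linarith [hx.1, hx.2]

theorem finsum_translate_eq_comp_fract (x : ℝ) : ∑ᶠ a : ℤ, η (x - a) = η (Int.fract x) :=
  finsum_eq_single _ ⌊x⌋ fun _ ha => translate_eq_zero_of_ne_floor hη₀ ha

theorem comp_fract_eq_translate_add_translate {n : ℤ} {x : ℝ}
    (hx : x ∈ Ioo (n - 1 : ℝ) (n + 1)) :
    η (Int.fract x) = η (x - (n - 1 : ℤ)) + η (x - n) := by
  have h_floor : ⌊x⌋ = n - 1 ∨ ⌊x⌋ = n := by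
    have h₁ : n - 1 ≤ ⌊x⌋ := Int.le_floor.2 (by push_cast; exact hx.1.le)
    have h₂ : ⌊x⌋ < n + 1 := Int.floor_lt.2 (by push_cast; exact hx.2)
    omega
  rcases h_floor with h | h
  · rw [translate_eq_zero_of_ne_floor hη₀ (by omega : n ≠ ⌊x⌋), add_zero, ← h]; rfl
  · rw [translate_eq_zero_of_ne_floor hη₀ (by omega : n - 1 ≠ ⌊x⌋), zero_add, ← h]; rfl

theorem comp_fract_eventuallyEq_translate_add_translate (p : ℝ) :
    (fun x => η (Int.fract x)) =ᶠ[𝓝 p] fun x => η (x - (⌊p⌋ - 1 : ℤ)) + η (x - ⌊p⌋) := by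
  have hp : p ∈ Ioo (⌊p⌋ - 1 : ℝ) (⌊p⌋ + 1) :=
    ⟨by linarith [Int.floor_le p], Int.lt_floor_add_one p⟩
  exact eventuallyEq_of_mem (Ioo_mem_nhds hp.1 hp.2) fun x hx =>
    comp_fract_eq_translate_add_translate hη₀ hx

theorem contDiff_comp_fract {n : WithTop ℕ∞} (hη : ContDiff ℝ n η) :
    ContDiff ℝ n fun x => η (Int.fract x) := by
  have h_translate (a : ℤ) : ContDiff ℝ n fun x : ℝ => η (x - a) :=
    hη.comp (contDiff_id.sub contDiff_const)
  refine contDiff_iff_contDiffAt.2 fun p => ?_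
  exact ((h_translate _).add (h_translate _)).contDiffAt.congr_of_eventuallyEq
    (comp_fract_eventuallyEq_translate_add_translate hη₀ p)

theorem translate_eventually_eq_zero (a : ℤ) : ∀ᶠ x in atTop, η (x - a) = 0 :=
  eventually_atTop.2 ⟨a + 1, fun x hx => hη₀ _ fun h => by linarith [h.2]⟩

end Translates

/-- Let `η : ℝ → ℝ` be smooth, positive exactly on `(0,1)`, and let `I` be the ideal of
`C^∞(ℝ)` generated by the integer translates `x ↦ η(x − a)`, `a ∈ ℤ`. The locally finite sum
`f(x) = Σ_{a∈ℤ} η(x − a)` is a smooth function which does not lie in `I`, although near every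
point of `ℝ` it agrees with an element of `I`. Hence `I` is not germ-determined. -/
theorem translate_ideal_not_germ_determined (η : ℝ → ℝ) (hη : ContDiff ℝ (⊤ : ℕ∞) η)
    (hpos : ∀ x ∈ Set.Ioo (0 : ℝ) 1, 0 < η x)
    (hzero : ∀ x ∉ Set.Ioo (0 : ℝ) 1, η x = 0) :
    ∃ f : SmoothR,
      (∀ x : ℝ, (f : ℝ → ℝ) x = ∑ᶠ a : ℤ, η (x - a)) ∧
      f ∉ Ideal.span {g : SmoothR | ∃ a : ℤ, ∀ x : ℝ, (g : ℝ → ℝ) x = η (x - a)} ∧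
      ∀ p : ℝ, ∃ h ∈ Ideal.span {g : SmoothR | ∃ a : ℤ, ∀ x : ℝ, (g : ℝ → ℝ) x = η (x - a)},
        ∀ᶠ x in nhds p, (f : ℝ → ℝ) x = (h : ℝ → ℝ) x := by
  set I := Ideal.span {g : SmoothR | ∃ a : ℤ, ∀ x : ℝ, (g : ℝ → ℝ) x = η (x - a)}
  let translate (a : ℤ) : SmoothR :=
    ⟨fun x => η (x - a), hη.comp (contDiff_id.sub contDiff_const)⟩
  have h_translate_mem (a : ℤ) : translate a ∈ I := Ideal.subset_span ⟨a, fun _ => rfl⟩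
  refine ⟨⟨fun x => η (Int.fract x), contDiff_comp_fract hzero hη⟩,
    fun x => (finsum_translate_eq_comp_fract hzero x).symm, fun hmem => ?_, fun p => ?_⟩
  · have h_eventually_zero : _ ∈ SmoothR.eventuallyZeroIdeal_s10 atTop := Ideal.span_le.2 (by
      rintro g ⟨a, hg⟩
      simpa only [SetLike.mem_coe, Subalgebra.mem_eventuallyZeroIdeal, hg] using
        translate_eventually_eq_zero hzero a) hmem
    have h_half : η (Int.fract (1 / 2)) ≠ 0 :=
      (hpos _ ⟨by norm_num [Int.fract_eq_self], by norm_num [Int.fract_eq_self]⟩).ne'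
    exact ((Int.fract_periodic ℝ).comp η |>.frequently_ne_zero_atTop one_pos h_half)
      (h_eventually_zero.mono fun x hx hne => hne hx)
  · exact ⟨translate (⌊p⌋ - 1) + translate ⌊p⌋, add_mem (h_translate_mem _) (h_translate_mem _),
      comp_fract_eventuallyEq_translate_add_translate hzero p⟩
end
end

section
/- Let X and Y be smooth manifolds. Then the map sending a smooth map f : X → Y to the ℝ-algebra homomorphism f* : C∞(Y) → C∞(X) defined by f*(g) = g ∘ f is a bijection from the set of smooth maps X → Y onto the set of ℝ-algebra homomorphisms C∞(Y) → C∞(X). -/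
open scoped Manifold
noncomputable section

/-!
An `ℝ`-algebra homomorphism `χ : C^∞(Y) → ℝ` is evaluation at a point. Otherwise every point has a
nonnegative function in `ker χ` that is positive there, and by compactness finitely many of them add
up to a function in `ker χ` positive on a sublevel set `{h ≤ χ h + 1}` of a proper smooth function
`h`; adding `(h - χ h)²` yields a nowhere vanishing, hence invertible, element of `ker χ`.

Composing `φ` with the evaluations at points of `X` therefore gives a map `F : X → Y` with
`φ g = g ∘ F`. It is smooth because the chart at `F x`, cut off by a bump function, has globally
smooth coordinates, and it is unique because smooth functions separate points.
-/

open scoped Topology ContDiff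
open Set Filter

section

variable {E : Type*} [NormedAddCommGroup E] [NormedSpace ℝ E]
  {H : Type*} [TopologicalSpace H] {I : ModelWithCorners ℝ E H}
  {M : Type*} [TopologicalSpace M] [ChartedSpace H M] {n : ℕ∞}

namespace ContMDiffMap

@[simp]
theorem algebraMap_apply (c : ℝ) (x : M) : algebraMap ℝ C^n⟮I, M; ℝ⟯ c x = c :=
  rfl

theorem isUnit_of_forall_ne_zero {f : C^n⟮I, M; ℝ⟯} (hf : ∀ x, f x ≠ 0) : IsUnit f :=
  IsUnit.of_mul_eq_one ⟨fun x ↦ (f x)⁻¹, f.contMDiff.inv₀ hf⟩ <| by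
    ext x; exact mul_inv_cancel₀ (hf x)

theorem exists_nonneg_pos_on_of_forall_ne_eval (χ : C^n⟮I, M; ℝ⟯ →ₐ[ℝ] ℝ)
    (hχ : ∀ x, ∃ f : C^n⟮I, M; ℝ⟯, χ f ≠ f x) {K : Set M} (hK : IsCompact K) :
    ∃ p : C^n⟮I, M; ℝ⟯, χ p = 0 ∧ (∀ x, 0 ≤ p x) ∧ ∀ x ∈ K, 0 < p x := by
  refine hK.induction_on ⟨0, map_zero χ, fun _ ↦ le_rfl, by simp⟩
    (fun s t hst ⟨p, hp0, hpnn, hpos⟩ ↦ ⟨p, hp0, hpnn, fun x hx ↦ hpos x (hst hx)⟩)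
    (fun s t ⟨p, hp0, hpnn, hpos⟩ ⟨q, hq0, hqnn, hqpos⟩ ↦ ⟨p + q, by simp [hp0, hq0],
      fun x ↦ add_nonneg (hpnn x) (hqnn x), fun x hx ↦ hx.elim
        (fun hs ↦ add_pos_of_pos_of_nonneg (hpos x hs) (hqnn x))
        (fun ht ↦ add_pos_of_nonneg_of_pos (hpnn x) (hqpos x ht))⟩) fun x _ ↦ ?_
  obtain ⟨f, hf⟩ := hχ x
  let p := (f - algebraMap ℝ C^n⟮I, M; ℝ⟯ (χ f)) ^ 2
  have hp : ∀ y, p y = (f y - χ f) ^ 2 := fun y ↦ by simp [p]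
  refine ⟨{y | 0 < p y}, mem_nhdsWithin_of_mem_nhds <|
    (isOpen_lt continuous_const p.contMDiff.continuous).mem_nhds ?_,
    p, by simp [p], fun y ↦ (hp y).symm ▸ sq_nonneg _, fun y hy ↦ hy⟩
  rw [mem_ofPred_eq, hp]
  exact sq_pos_of_ne_zero (sub_ne_zero.mpr (Ne.symm hf))

end ContMDiffMap

variable [FiniteDimensional ℝ E] [IsManifold I ∞ M] [T2Space M] [SigmaCompactSpace M]

theorem exists_contMDiffMap_isCompact_sublevel :
    ∃ h : C^n⟮I, M; ℝ⟯, ∀ c : ℝ, IsCompact {x | h x ≤ c} := by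
  have := Manifold.locallyCompact_of_finiteDimensional (M := M) I
  let K := CompactExhaustion.choice M
  -- The constraints `k ≤ h x` for `x ∉ K k` are convex and locally satisfied by a constant,
  -- so a partition of unity glues those constants into a global `h`.
  obtain ⟨h, hK⟩ : ∃ h : C^n⟮I, M; ℝ⟯, ∀ x, h x ∈ ⋂ (k : ℕ) (_ : x ∉ K k), Ici (k : ℝ) :=
    exists_contMDiffMap_forall_mem_convex_of_local_const I
      (fun _ ↦ convex_iInter fun _ ↦ convex_iInter fun _ ↦ convex_Ici _) fun x ↦ by
      obtain ⟨m, hm⟩ := K.exists_mem x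
      refine ⟨m + 1, mem_of_superset (isOpen_interior.mem_nhds
        (K.subset_interior_succ m hm)) fun y hy ↦ ?_⟩
      simp only [mem_iInter, mem_Ici]
      intro k hk
      have : k ≤ m + 1 := by
        by_contra! hlt
        exact hk (K.subset hlt.le (interior_subset hy))
      exact_mod_cast this
  simp only [mem_iInter, mem_Ici] at hK
  refine ⟨h, fun c ↦ (K.isCompact (⌈c⌉₊ + 1)).of_isClosed_subset
    (isClosed_le h.contMDiff.continuous continuous_const) fun x hx ↦ ?_⟩
  by_contra hxK
  have hle : ((⌈c⌉₊ + 1 : ℕ) : ℝ) ≤ h x := hK x _ hxK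
  have hx : h x ≤ c := hx
  push_cast at hle
  linarith [Nat.le_ceil c]

namespace ContMDiffMap

theorem exists_eq_eval_of_algHom (χ : C^n⟮I, M; ℝ⟯ →ₐ[ℝ] ℝ) :
    ∃ x, ∀ f : C^n⟮I, M; ℝ⟯, χ f = f x := by
  by_contra! hχ
  obtain ⟨h, hh⟩ := exists_contMDiffMap_isCompact_sublevel (I := I) (M := M) (n := n)
  obtain ⟨p, hp0, hpnn, hpos⟩ := exists_nonneg_pos_on_of_forall_ne_eval χ hχ (hh (χ h + 1))
  let G := (h - algebraMap ℝ C^n⟮I, M; ℝ⟯ (χ h)) ^ 2 + p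
  have hG : ∀ x, G x ≠ 0 := by
    intro x
    have hGx : G x = (h x - χ h) ^ 2 + p x := by simp [G]
    rw [hGx]
    by_cases hx : h x ≤ χ h + 1
    · exact (add_pos_of_nonneg_of_pos (sq_nonneg _) (hpos x hx)).ne'
    · nlinarith [hpnn x]
  exact ((isUnit_of_forall_ne_zero hG).map χ).ne_zero (by simp [G, hp0])

theorem eq_of_forall_apply_eq {x y : M} (h : ∀ f : C^n⟮I, M; ℝ⟯, f x = f y) : x = y := by
  by_contra hxy
  obtain ⟨f, hf0, hf1, -⟩ := exists_contMDiffMap_zero_one_of_isClosed I (n := n)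
    isClosed_singleton isClosed_singleton (disjoint_singleton.2 hxy)
  simpa [hf0 rfl, hf1 rfl] using h f

end ContMDiffMap

theorem continuous_of_forall_continuous_contMDiffMap_comp {Z : Type*} [TopologicalSpace Z]
    {F : Z → M} (hF : ∀ f : C^n⟮I, M; ℝ⟯, Continuous (f ∘ F)) : Continuous F := by
  refine continuous_def.2 fun U hU ↦ isOpen_iff_mem_nhds.2 fun z hz ↦ ?_
  obtain ⟨f, hf0, hf1, -⟩ := exists_contMDiffMap_zero_one_of_isClosed I (n := n)
    hU.isClosed_compl isClosed_singleton (disjoint_singleton_right.2 (not_not.2 hz))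
  have : {z' | f (F z') ≠ 0} ∈ 𝓝 z :=
    (isOpen_ne_fun (hF f) continuous_const).mem_nhds (by simp [hf1 rfl])
  exact mem_of_superset this fun z' hz' ↦ not_not.1 fun h ↦ hz' (hf0 h)

variable {E' : Type*} [NormedAddCommGroup E'] [NormedSpace ℝ E']
  {H' : Type*} [TopologicalSpace H'] {J : ModelWithCorners ℝ E' H'}
  {N : Type*} [TopologicalSpace N] [ChartedSpace H' N]

theorem contMDiff_of_forall_contMDiff_clm_comp {G : N → E}
    (hG : ∀ ℓ : E →L[ℝ] ℝ, ContMDiff J 𝓘(ℝ) n (ℓ ∘ G)) : ContMDiff J 𝓘(ℝ, E) n G := by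
  let e := (Module.finBasis ℝ E).equivFunL
  have : ContMDiff J 𝓘(ℝ, Fin _ → ℝ) n (e ∘ G) :=
    contMDiff_pi_space.2 fun i ↦
      hG ((ContinuousLinearMap.proj (φ := fun _ ↦ ℝ) i).comp e.toContinuousLinearMap)
  simpa [Function.comp_def] using e.symm.toContinuousLinearMap.contMDiff.comp this

theorem contMDiff_of_forall_contMDiff_contMDiffMap_comp {F : N → M}
    (hF : ∀ f : C^n⟮I, M; ℝ⟯, ContMDiff J 𝓘(ℝ) n (f ∘ F)) : ContMDiff J I n F := by
  have hcont : Continuous F :=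
    continuous_of_forall_continuous_contMDiffMap_comp fun f ↦ (hF f).continuous
  intro z
  let b : SmoothBumpFunction I (F z) := Classical.arbitrary _
  have hψ : ContMDiff I 𝓘(ℝ, E) n fun y ↦ b y • extChartAt I (F z) y :=
    (b.contMDiff_smul contMDiffOn_extChartAt).of_le (by exact_mod_cast le_top)
  have hψF : ContMDiff J 𝓘(ℝ, E) n ((fun y ↦ b y • extChartAt I (F z) y) ∘ F) :=
    contMDiff_of_forall_contMDiff_clm_comp fun ℓ ↦ hF ⟨_, ℓ.contMDiff.comp hψ⟩
  refine contMDiffAt_iff_target.2 ⟨hcont.continuousAt, (hψF z).congr_of_eventuallyEq ?_⟩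
  filter_upwards [(hcont.tendsto z).eventually b.eventuallyEq_one] with z' hz'
  simp [hz']

theorem ContMDiffMap.exists_eq_comp_of_algHom (φ : C^n⟮I, M; ℝ⟯ →ₐ[ℝ] C^n⟮J, N; ℝ⟯) :
    ∃ F : C^n⟮J, N; I, M⟯, ∀ f x, φ f x = f (F x) := by
  choose F hF using fun x ↦ exists_eq_eval_of_algHom
    (((Pi.evalAlgHom ℝ (fun _ ↦ ℝ) x).comp coeFnAlgHom).comp φ)
  refine ⟨⟨F, contMDiff_of_forall_contMDiff_contMDiffMap_comp fun f ↦ ?_⟩, fun f x ↦ hF x f⟩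
  convert (φ f).contMDiff
  exact funext fun x ↦ (hF x f).symm

end

theorem smooth_maps_biject_with_algHoms_general
    {d e : ℕ} {X Y : Type}
    [TopologicalSpace X] [ChartedSpace (EuclideanSpace ℝ (Fin d)) X]
    [TopologicalSpace Y] [ChartedSpace (EuclideanSpace ℝ (Fin e)) Y]
    [IsManifold (𝓡 e) (⊤ : ℕ∞) Y] [T2Space Y] [SecondCountableTopology Y]
    (φ : ContMDiffMap (𝓡 e) 𝓘(ℝ, ℝ) Y ℝ (⊤ : ℕ∞) →ₐ[ℝ] ContMDiffMap (𝓡 d) 𝓘(ℝ, ℝ) X ℝ (⊤ : ℕ∞)) :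
    ∃! f : ContMDiffMap (𝓡 d) (𝓡 e) X Y (⊤ : ℕ∞),
      ∀ (g : ContMDiffMap (𝓡 e) 𝓘(ℝ, ℝ) Y ℝ (⊤ : ℕ∞)) (x : X), φ g x = g (f x) := by
  have := Manifold.locallyCompact_of_finiteDimensional (M := Y) (𝓡 e)
  obtain ⟨f, hf⟩ := ContMDiffMap.exists_eq_comp_of_algHom φ
  refine ⟨f, hf, fun f' hf' ↦ ContMDiffMap.ext fun x ↦
    ContMDiffMap.eq_of_forall_apply_eq (I := 𝓡 e) (n := ⊤) fun g ↦ ?_⟩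
  rw [← hf' g x, hf g x]

/-- For smooth manifolds `X`, `Y`, the assignment `f ↦ f^*` (where `f^*(g) = g ∘ f`) is a
bijection from smooth maps `X → Y` to `ℝ`-algebra homomorphisms `C^∞(Y) → C^∞(X)`:
every `ℝ`-algebra homomorphism `φ : C^∞(Y) → C^∞(X)` equals `f^*` for a unique smooth map
`f : X → Y`. -/
theorem smooth_maps_biject_with_algHoms
    {d e : ℕ} {X Y : Type}
    [TopologicalSpace X] [ChartedSpace (EuclideanSpace ℝ (Fin d)) X]
    [IsManifold (𝓡 d) (⊤ : ℕ∞) X] [T2Space X] [SecondCountableTopology X]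
    [TopologicalSpace Y] [ChartedSpace (EuclideanSpace ℝ (Fin e)) Y]
    [IsManifold (𝓡 e) (⊤ : ℕ∞) Y] [T2Space Y] [SecondCountableTopology Y]
    (φ : ContMDiffMap (𝓡 e) 𝓘(ℝ, ℝ) Y ℝ (⊤ : ℕ∞) →ₐ[ℝ] ContMDiffMap (𝓡 d) 𝓘(ℝ, ℝ) X ℝ (⊤ : ℕ∞)) :
    ∃! f : ContMDiffMap (𝓡 d) (𝓡 e) X Y (⊤ : ℕ∞),
      ∀ (g : ContMDiffMap (𝓡 e) 𝓘(ℝ, ℝ) Y ℝ (⊤ : ℕ∞)) (x : X), φ g x = g (f x) :=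
  smooth_maps_biject_with_algHoms_general φ
end
end

section
/- Let U ⊆ ℝ^n be open and let f ∈ C∞(ℝ^n) be a characteristic function for U, i.e. U = {x ∈ ℝ^n : f(x) ≠ 0}. Then the map Φ : C∞(ℝ^{n+1}) → C∞(U) defined by Φ(F)(x) = F(x_1,…,x_n, 1/f(x)) for x ∈ U is a surjective ℝ-algebra homomorphism whose kernel is the ideal of C∞(ℝ^{n+1}) generated by the single function (x_1,…,x_n,t) ↦ t·f(x_1,…,x_n) − 1. In particular C∞(U) ≅ C∞(ℝ^{n+1})/(x_{n+1} f(x_1,…,x_n) − 1) as ℝ-algebras. -/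
noncomputable section

/-- The `ℝ`-algebra `C∞(U)` of smooth functions `U → ℝ` on a subset `U ⊆ ℝ^n`: functions
which near each point of `U` agree with a smooth function on `ℝ^n` (for `U` open this is the
usual notion of smoothness). -/
def SmoothOnAlg (n : ℕ) (U : Set (Fin n → ℝ)) : Subalgebra ℝ (↥U → ℝ) where
  carrier := {g | ∀ p : ↥U, ∃ G : (Fin n → ℝ) → ℝ, ContDiff ℝ (⊤ : ℕ∞) G ∧
    ∀ᶠ x in nhds (p : Fin n → ℝ), ∀ h : x ∈ U, g ⟨x, h⟩ = G x}
  mul_mem' := fun {f g} hf hg => by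
    simp only [Set.mem_setOf_eq] at *
    intro p
    obtain ⟨Gf, hGf, ef⟩ := hf p
    obtain ⟨Gg, hGg, eg⟩ := hg p
    refine ⟨Gf * Gg, hGf.mul hGg, ?_⟩
    filter_upwards [ef, eg] with x hfx hgx h
    show f ⟨x, h⟩ * g ⟨x, h⟩ = Gf x * Gg x
    rw [hfx h, hgx h]
  one_mem' := by
    simp only [Set.mem_setOf_eq]
    intro p
    exact ⟨fun _ => 1, contDiff_const, Filter.Eventually.of_forall fun x h => rfl⟩
  add_mem' := fun {f g} hf hg => by
    simp only [Set.mem_setOf_eq] at *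
    intro p
    obtain ⟨Gf, hGf, ef⟩ := hf p
    obtain ⟨Gg, hGg, eg⟩ := hg p
    refine ⟨Gf + Gg, hGf.add hGg, ?_⟩
    filter_upwards [ef, eg] with x hfx hgx h
    show f ⟨x, h⟩ + g ⟨x, h⟩ = Gf x + Gg x
    rw [hfx h, hgx h]
  zero_mem' := by
    simp only [Set.mem_setOf_eq]
    intro p
    exact ⟨fun _ => 0, contDiff_const, Filter.Eventually.of_forall fun x h => rfl⟩
  algebraMap_mem' := fun r => by
    simp only [Set.mem_setOf_eq]
    intro p
    exact ⟨fun _ => r, contDiff_const, Filter.Eventually.of_forall fun x h => rfl⟩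


/-!
`Φ F` is smooth on `U` because `1 / f` agrees near each point of `U` with a globally smooth
function. Write `u(x, t) = t f(x)` and fix a bump `β` with `β = 1` near `1` and support in
`u > 1/2`. A smooth `g` on `U` is the image of `g(x) β(u(x, t))`, which is smooth on `ℝⁿ⁺¹`
because `β ∘ u` vanishes near `{f = 0}`. If `F` vanishes on the hypersurface `u = 1`, write
`F = F β(u) + F (1 - β(u))`: the second term is `(u - 1)` times the smooth function
`F (1 - β(u)) / (u - 1)`, and where `β(u) ≠ 0` the point `(x, 1 / f x)` is `(x, t)` moved by
`(u - 1)` times a smooth vector, so Hadamard's lemma `F b - F a = G(a, b) (b - a)` with smooth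
`G` exhibits `F β(u)` as a multiple of `u - 1` as well.
-/

open Metric Topology
open scoped ContDiff

universe u

section ParametricIntegral

-- `E` and `F` share a universe so that the induction below can pass from `F` to `E →L[ℝ] F`.
variable {E F : Type u} [NormedAddCommGroup E] [NormedSpace ℝ E] [FiniteDimensional ℝ E]
  [NormedAddCommGroup F] [NormedSpace ℝ F]

theorem hasFDerivAt_intervalIntegral_of_contDiff {H : E × ℝ → F} (hH : ContDiff ℝ 1 H)
    (x₀ : E) :
    HasFDerivAt (fun x => ∫ s in (0 : ℝ)..1, H (x, s))
      (∫ s in (0 : ℝ)..1, fderiv ℝ H (x₀, s) ∘L ContinuousLinearMap.inl ℝ E ℝ) x₀ := by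
  have hD : Continuous fun p => fderiv ℝ H p ∘L ContinuousLinearMap.inl ℝ E ℝ :=
    (hH.continuous_fderiv one_ne_zero).clm_comp continuous_const
  obtain ⟨C, hC⟩ := ((isCompact_closedBall x₀ 1).prod (isCompact_uIcc (a := (0 : ℝ)) (b := 1)))
    |>.exists_bound_of_continuousOn hD.continuousOn
  refine intervalIntegral.hasFDerivAt_integral_of_dominated_of_fderiv_le
    (F := fun x s => H (x, s)) (F' := fun x s => fderiv ℝ H (x, s) ∘L ContinuousLinearMap.inl ℝ E ℝ)
    (bound := fun _ => C) (ball_mem_nhds x₀ one_pos) ?_ ?_ ?_ ?_ ?_ ?_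
  · exact .of_forall fun x => (hH.continuous.comp (.prodMk_right x)).aestronglyMeasurable
  · exact (hH.continuous.comp (.prodMk_right x₀)).intervalIntegrable 0 1
  · exact (hD.comp (.prodMk_right x₀)).aestronglyMeasurable
  · exact .of_forall fun s hs x hx =>
      hC (x, s) ⟨ball_subset_closedBall hx, Set.uIoc_subset_uIcc hs⟩
  · exact intervalIntegrable_const
  · refine .of_forall fun s _ x _ => ?_
    exact ((hH.differentiable one_ne_zero (x, s)).hasFDerivAt).comp x
      ((hasFDerivAt_id x).prodMk (hasFDerivAt_const s x))

theorem contDiff_intervalIntegral_of_contDiff [CompleteSpace F] {H : E × ℝ → F}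
    (hH : ContDiff ℝ ∞ H) :
    ContDiff ℝ ∞ fun x => ∫ s in (0 : ℝ)..1, H (x, s) := by
  suffices ∀ (k : ℕ) {F : Type u} [NormedAddCommGroup F] [NormedSpace ℝ F] [CompleteSpace F]
      (H : E × ℝ → F), ContDiff ℝ ∞ H → ContDiff ℝ k fun x => ∫ s in (0 : ℝ)..1, H (x, s) from
    contDiff_infty.2 fun k => this k H hH
  intro k
  induction k with
  | zero =>
    intro F _ _ _ H hH
    exact contDiff_zero.2 <|
      intervalIntegral.continuous_parametric_intervalIntegral_of_continuous'
        (f := fun x s => H (x, s)) hH.continuous 0 1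
  | succ k ih =>
    intro F _ _ _ H hH
    have hH1 : ContDiff ℝ 1 H := hH.of_le (by exact_mod_cast le_top)
    have hderiv := fun x₀ => hasFDerivAt_intervalIntegral_of_contDiff hH1 x₀
    rw [Nat.cast_succ]
    refine contDiff_succ_iff_fderiv.2 ⟨fun x => (hderiv x).differentiableAt, by simp, ?_⟩
    rw [funext fun x => (hderiv x).fderiv]
    exact ih _ ((contDiff_infty_iff_fderiv.1 hH).2.clm_comp contDiff_const)

theorem exists_contDiff_sub_eq_apply_sub [CompleteSpace F] {f : E → F} (hf : ContDiff ℝ ∞ f) :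
    ∃ G : E × E → E →L[ℝ] F, ContDiff ℝ ∞ G ∧ ∀ a b, f b - f a = G (a, b) (b - a) := by
  have hDf : ContDiff ℝ ∞ (fderiv ℝ f) := (contDiff_infty_iff_fderiv.1 hf).2
  refine ⟨fun p => ∫ s in (0 : ℝ)..1, fderiv ℝ f (p.1 + s • (p.2 - p.1)),
    contDiff_intervalIntegral_of_contDiff
      (H := fun q : (E × E) × ℝ => fderiv ℝ f (q.1.1 + q.2 • (q.1.2 - q.1.1)))
      (hDf.comp (by fun_prop)), fun a b => ?_⟩
  have hseg : ∀ s : ℝ, HasDerivAt (fun s : ℝ => f (a + s • (b - a)))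
      (fderiv ℝ f (a + s • (b - a)) (b - a)) s := fun s =>
    (hf.differentiable (by simp) _).hasFDerivAt.comp_hasDerivAt s
      (((hasDerivAt_id s).smul_const (b - a)).const_add a |>.congr_deriv (one_smul ℝ _))
  have hcont : Continuous fun s : ℝ => fderiv ℝ f (a + s • (b - a)) :=
    hDf.continuous.comp (by fun_prop)
  rw [ContinuousLinearMap.intervalIntegral_apply (hcont.intervalIntegrable 0 1),
    intervalIntegral.integral_eq_sub_of_hasDerivAt (fun s _ => hseg s)
      ((hcont.clm_apply continuous_const).intervalIntegrable 0 1)]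
  simp

end ParametricIntegral

theorem exists_contDiff_mul_eq_of_apply_add_smul_eq_zero {E : Type} [NormedAddCommGroup E]
    [NormedSpace ℝ E] [FiniteDimensional ℝ E] {f p χ : E → ℝ} {V : E → E}
    (hf : ContDiff ℝ ∞ f) (hp : ContDiff ℝ ∞ p) (hχ : ContDiff ℝ ∞ χ) (hV : ContDiff ℝ ∞ V)
    (hzero : ∀ y, χ y ≠ 0 → f (y + p y • V y) = 0) :
    ∃ q : E → ℝ, ContDiff ℝ ∞ q ∧ ∀ y, f y * χ y = p y * q y := by
  obtain ⟨G, hG, hGf⟩ := exists_contDiff_sub_eq_apply_sub hf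
  refine ⟨fun y => -(G (y, y + p y • V y) (V y) * χ y),
    ((hG.comp (contDiff_id.prodMk (contDiff_id.add (hp.smul hV)))).clm_apply hV).mul hχ |>.neg,
    fun y => ?_⟩
  have hstep := hGf y (y + p y • V y)
  rw [add_sub_cancel_left, map_smul, smul_eq_mul] at hstep
  by_cases hχy : χ y = 0
  · simp [hχy]
  · rw [hzero y hχy] at hstep
    linear_combination (-χ y) * hstep

theorem exists_contDiff_eq_inv_of_le_abs {r : ℝ} (hr : 0 < r) :
    ∃ ν : ℝ → ℝ, ContDiff ℝ ∞ ν ∧ ∀ v, r ≤ |v| → ν v = v⁻¹ := by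
  let b : ContDiffBump (0 : ℝ) := ⟨r / 2, r, half_pos hr, half_lt_self hr⟩
  have hpos : ∀ v : ℝ, 0 < v ^ 2 + b v ^ 2 := by
    intro v
    rcases eq_or_ne v 0 with rfl | hv
    · rw [b.one_of_mem_closedBall (by simpa using (half_pos hr).le)]; norm_num
    · have := pow_pos (abs_pos.2 hv) 2
      rw [sq_abs] at this
      positivity
  refine ⟨fun v => v / (v ^ 2 + b v ^ 2),
    contDiff_id.div ((contDiff_id.pow 2).add (b.contDiff.pow 2)) fun v => (hpos v).ne',
    fun v hv => ?_⟩
  have hv0 : v ≠ 0 := by rintro rfl; simp at hv; linarith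
  simp only [b.zero_of_le_dist (by simpa [Real.dist_eq] using hv), zero_pow two_ne_zero, add_zero]
  field_simp

theorem ContDiffBump.exists_contDiff_sub_mul_eq_one_sub {a : ℝ} (β : ContDiffBump a) :
    ∃ γ : ℝ → ℝ, ContDiff ℝ ∞ γ ∧ ∀ v, (v - a) * γ v = 1 - β v := by
  obtain ⟨ν, hν, hνinv⟩ := exists_contDiff_eq_inv_of_le_abs β.rIn_pos
  refine ⟨fun v => (1 - β v) * ν (v - a),
    (contDiff_const.sub β.contDiff).mul (hν.comp (contDiff_id.sub contDiff_const)), fun v => ?_⟩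
  dsimp only
  rcases le_or_gt β.rIn |v - a| with hfar | hnear
  · have hva : v - a ≠ 0 := fun h => by rw [h, abs_zero] at hfar; linarith [β.rIn_pos]
    rw [hνinv _ hfar]
    field_simp
  · rw [β.one_of_mem_closedBall (by rw [mem_closedBall, Real.dist_eq]; exact hnear.le)]
    ring

theorem exists_contDiff_eventuallyEq_inv {E : Type*} [NormedAddCommGroup E] [NormedSpace ℝ E]
    {f : E → ℝ} (hf : ContDiff ℝ ∞ f) {p : E} (hp : f p ≠ 0) :
    ∃ g : E → ℝ, ContDiff ℝ ∞ g ∧ ∀ᶠ x in 𝓝 p, g x = (f x)⁻¹ := by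
  obtain ⟨ν, hν, hνinv⟩ := exists_contDiff_eq_inv_of_le_abs (half_pos (abs_pos.2 hp))
  refine ⟨ν ∘ f, hν.comp hf, ?_⟩
  filter_upwards [hf.continuous.abs.continuousAt.eventually_const_lt
    (half_lt_self (abs_pos.2 hp))] with x hx
  exact hνinv _ hx.le

section InverseGraph

variable {n : ℕ}

theorem contDiff_finInit : ContDiff ℝ ∞ (Fin.init : (Fin (n + 1) → ℝ) → Fin n → ℝ) :=
  contDiff_pi.2 fun i => contDiff_apply ℝ ℝ i.castSucc

theorem contDiff_finSnoc :
    ContDiff ℝ ∞ fun p : (Fin n → ℝ) × ℝ => (Fin.snoc p.1 p.2 : Fin (n + 1) → ℝ) :=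
  contDiff_pi.2 fun i => Fin.lastCases (by simpa using contDiff_snd)
    (fun j => by simp only [Fin.snoc_castSucc]; exact (contDiff_apply ℝ ℝ j).comp contDiff_fst) i

theorem add_smul_single_last_eq_snoc (y : Fin (n + 1) → ℝ) (c : ℝ) :
    y + c • Pi.single (Fin.last n) 1 = Fin.snoc (Fin.init y) (y (Fin.last n) + c) := by
  funext i
  induction i using Fin.lastCases with
  | last => simp
  | cast j => simp [Fin.init, (Fin.castSucc_lt_last j).ne]

theorem contDiff_last_mul_comp_init {f : (Fin n → ℝ) → ℝ} (hf : ContDiff ℝ ∞ f) :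
    ContDiff ℝ ∞ fun y : Fin (n + 1) → ℝ => y (Fin.last n) * f (Fin.init y) :=
  (contDiff_apply ℝ ℝ _).mul (hf.comp contDiff_finInit)

theorem comp_snoc_inv_mem_smoothOnAlg {f : (Fin n → ℝ) → ℝ} (hf : ContDiff ℝ ∞ f)
    {F : (Fin (n + 1) → ℝ) → ℝ} (hF : ContDiff ℝ ∞ F) :
    (fun x : {x | f x ≠ 0} => F (Fin.snoc (x : Fin n → ℝ) (f x)⁻¹))
      ∈ SmoothOnAlg n {x | f x ≠ 0} := by
  intro p
  obtain ⟨g, hg, hgf⟩ := exists_contDiff_eventuallyEq_inv hf p.2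
  exact ⟨fun x => F (Fin.snoc x (g x)), hF.comp (contDiff_finSnoc.comp (contDiff_id.prodMk hg)),
    hgf.mono fun x hx _ => by dsimp only; rw [hx]⟩

theorem contDiff_extend_comp_mul_of_tsupport_subset {E : Type*} [NormedAddCommGroup E]
    [NormedSpace ℝ E] {U : Set (Fin n → ℝ)} {g : U → ℝ} (hg : g ∈ SmoothOnAlg n U)
    {π : E → Fin n → ℝ} (hπ : ContDiff ℝ ∞ π) {χ : E → ℝ} (hχ : ContDiff ℝ ∞ χ)
    (hsupp : tsupport χ ⊆ π ⁻¹' U) :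
    ContDiff ℝ ∞ fun y => Function.extend Subtype.val g 0 (π y) * χ y := by
  rw [contDiff_iff_contDiffAt]
  intro y₀
  by_cases hy₀ : π y₀ ∈ U
  · obtain ⟨G, hG, hGg⟩ := hg ⟨π y₀, hy₀⟩
    refine ((hG.comp hπ).mul hχ).contDiffAt.congr_of_eventuallyEq ?_
    filter_upwards [hπ.continuous.tendsto y₀ |>.eventually hGg] with y hy
    by_cases h : π y ∈ U
    · rw [Function.comp_apply, ← hy h, ← Subtype.val_injective.extend_apply g 0 ⟨π y, h⟩]
    · rw [image_eq_zero_of_notMem_tsupport fun hy' => h (hsupp hy'), mul_zero, mul_zero]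
  · refine (contDiffAt_const (c := 0)).congr_of_eventuallyEq ?_
    filter_upwards [notMem_tsupport_iff_eventuallyEq.1 fun h => hy₀ (hsupp h)] with y hy
    simp [hy]

theorem exists_contDiff_eq_mul_of_comp_snoc_inv_eq_zero {f : (Fin n → ℝ) → ℝ}
    (hf : ContDiff ℝ ∞ f) {F : (Fin (n + 1) → ℝ) → ℝ} (hF : ContDiff ℝ ∞ F)
    (hzero : ∀ x, f x ≠ 0 → F (Fin.snoc x (f x)⁻¹) = 0) :
    ∃ Q : (Fin (n + 1) → ℝ) → ℝ, ContDiff ℝ ∞ Q ∧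
      ∀ y, F y = Q y * (y (Fin.last n) * f (Fin.init y) - 1) := by
  let β : ContDiffBump (1 : ℝ) := ⟨1 / 4, 1 / 2, by norm_num, by norm_num⟩
  let u : (Fin (n + 1) → ℝ) → ℝ := fun y => y (Fin.last n) * f (Fin.init y)
  have hu : ContDiff ℝ ∞ u := contDiff_last_mul_comp_init hf
  obtain ⟨γ, hγ, hγβ⟩ := β.exists_contDiff_sub_mul_eq_one_sub
  obtain ⟨ν, hν, hνinv⟩ := exists_contDiff_eq_inv_of_le_abs (r := 1 / 2) (by norm_num)
  -- Near `u = 1`, moving the last coordinate `t` by `(u - 1) • (-t / u)` lands on `t = 1 / f`.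
  have hgraph : ∀ y, β (u y) ≠ 0 →
      F (y + (u y - 1) • (-(y (Fin.last n) * ν (u y))) • Pi.single (Fin.last n) 1) = 0 := by
    intro y hβ
    have hnear : u y ∈ ball (1 : ℝ) (1 / 2) := by rw [← β.support_eq]; exact hβ
    rw [mem_ball, Real.dist_eq, abs_lt] at hnear
    have hu0 : u y ≠ 0 := by linarith
    have hfy : f (Fin.init y) ≠ 0 := right_ne_zero_of_mul hu0
    have hνu : ν (u y) = (u y)⁻¹ := hνinv _ (by rw [abs_of_pos (by linarith)]; linarith)
    rw [smul_smul, add_smul_single_last_eq_snoc, ← hzero _ hfy, hνu]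
    congr 2
    field_simp
    ring
  obtain ⟨q, hq, hFq⟩ := exists_contDiff_mul_eq_of_apply_add_smul_eq_zero hF
    (hu.sub contDiff_const) (β.contDiff.comp hu)
    ((((contDiff_apply ℝ ℝ _).mul (hν.comp hu)).neg).smul contDiff_const) hgraph
  refine ⟨fun y => q y + F y * γ (u y), hq.add (hF.mul (hγ.comp hu)), fun y => ?_⟩
  have hFqy : F y * β (u y) = (u y - 1) * q y := hFq y
  linear_combination hFqy - F y * hγβ (u y)

variable (f : (Fin n → ℝ) → ℝ) (hf : ContDiff ℝ ∞ f)

def invGraphPullback : SmoothAlg (n + 1) →ₐ[ℝ] SmoothOnAlg n {x | f x ≠ 0} where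
  toFun F :=
    ⟨fun x => F.1 (Fin.snoc (x : Fin n → ℝ) (f x)⁻¹), comp_snoc_inv_mem_smoothOnAlg hf F.2⟩
  map_one' := rfl
  map_mul' _ _ := rfl
  map_zero' := rfl
  map_add' _ _ := rfl
  commutes' _ := rfl

theorem invGraphPullback_apply (F : SmoothAlg (n + 1)) (x : {x | f x ≠ 0}) :
    (invGraphPullback f hf F : {x | f x ≠ 0} → ℝ) x = F.1 (Fin.snoc (x : Fin n → ℝ) (f x)⁻¹) :=
  rfl

def invGraphEquation : SmoothAlg (n + 1) :=
  ⟨fun y => y (Fin.last n) * f (Fin.init y) - 1,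
    (contDiff_last_mul_comp_init hf).sub contDiff_const⟩

theorem invGraphPullback_surjective : Function.Surjective (invGraphPullback f hf) := by
  intro g
  let β : ContDiffBump (1 : ℝ) := ⟨1 / 4, 1 / 2, by norm_num, by norm_num⟩
  let u : (Fin (n + 1) → ℝ) → ℝ := fun y => y (Fin.last n) * f (Fin.init y)
  have hu : ContDiff ℝ ∞ u := contDiff_last_mul_comp_init hf
  have hsupp : tsupport (β ∘ u) ⊆ Fin.init ⁻¹' {x | f x ≠ 0} := by
    refine (tsupport_comp_subset_preimage β hu.continuous).trans fun y hy => ?_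
    rw [Set.mem_preimage, β.tsupport_eq, mem_closedBall, Real.dist_eq, abs_le] at hy
    have : u y ≠ 0 := by norm_num [β] at hy; linarith
    exact right_ne_zero_of_mul this
  refine ⟨⟨_, contDiff_extend_comp_mul_of_tsupport_subset g.2 contDiff_finInit
    (β.contDiff.comp hu) hsupp⟩, Subtype.ext (funext fun x => ?_)⟩
  have hx : f x ≠ 0 := x.2
  rw [invGraphPullback_apply]
  simp only [Function.comp_apply, u, Fin.init_snoc, Fin.snoc_last, inv_mul_cancel₀ hx,
    β.one_of_mem_closedBall (mem_closedBall_self (by norm_num [β])), mul_one]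
  exact Subtype.val_injective.extend_apply g.1 0 x

theorem ker_invGraphPullback :
    RingHom.ker (invGraphPullback f hf) = Ideal.span {invGraphEquation f hf} := by
  refine le_antisymm (fun F hF => ?_) ?_
  · obtain ⟨Q, hQ, hFQ⟩ := exists_contDiff_eq_mul_of_comp_snoc_inv_eq_zero hf (F := F.1) F.2
      fun x hx => congrFun (congrArg Subtype.val (RingHom.mem_ker.1 hF)) ⟨x, hx⟩
    exact Ideal.mem_span_singleton'.2 ⟨⟨Q, hQ⟩, Subtype.ext (funext fun y => (hFQ y).symm)⟩
  · refine Ideal.span_le.2 (Set.singleton_subset_iff.2 (RingHom.mem_ker.2 ?_))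
    refine Subtype.ext (funext fun x => ?_)
    simp [invGraphPullback_apply, invGraphEquation, inv_mul_cancel₀ x.2]

end InverseGraph

theorem smoothOnAlg_iso_quotient_general (n : ℕ) (U : Set (Fin n → ℝ))
    (f : SmoothAlg n) (hchar : U = {x | (f : (Fin n → ℝ) → ℝ) x ≠ 0}) :
    ∃ Φ : SmoothAlg (n + 1) →ₐ[ℝ] SmoothOnAlg n U,
      (∀ (F : SmoothAlg (n + 1)) (x : ↥U),
          (Φ F : ↥U → ℝ) x
            = (F : (Fin (n + 1) → ℝ) → ℝ)
                (Fin.snoc (x : Fin n → ℝ) (1 / (f : (Fin n → ℝ) → ℝ) (x : Fin n → ℝ)))) ∧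
      Function.Surjective Φ ∧
      ∃ P : SmoothAlg (n + 1),
        (∀ y : Fin (n + 1) → ℝ,
            (P : (Fin (n + 1) → ℝ) → ℝ) y
              = y (Fin.last n) * (f : (Fin n → ℝ) → ℝ) (fun i => y i.castSucc) - 1) ∧
        RingHom.ker Φ = Ideal.span {P} := by
  subst hchar
  have hf : ContDiff ℝ ∞ (f : (Fin n → ℝ) → ℝ) := f.2
  exact ⟨invGraphPullback _ hf, fun F x => by rw [invGraphPullback_apply, one_div],
    invGraphPullback_surjective _ hf, invGraphEquation _ hf, fun _ => rfl,
    ker_invGraphPullback _ hf⟩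

/-- If `U = {f ≠ 0}` for `f ∈ C^∞(ℝ^n)`, then `F ↦ F(x, 1/f(x))` is a surjective `ℝ`-algebra
homomorphism `C^∞(ℝ^{n+1}) → C^∞(U)` with kernel the principal ideal generated by
`t·f(x) − 1`; in particular `C^∞(U) ≅ C^∞(ℝ^{n+1})/(x_{n+1} f(x_1,…,x_n) − 1)`. -/
theorem smoothOnAlg_iso_quotient (n : ℕ) (U : Set (Fin n → ℝ)) (hUopen : IsOpen U)
    (f : SmoothAlg n) (hchar : U = {x | (f : (Fin n → ℝ) → ℝ) x ≠ 0}) :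
    ∃ Φ : SmoothAlg (n + 1) →ₐ[ℝ] SmoothOnAlg n U,
      (∀ (F : SmoothAlg (n + 1)) (x : ↥U),
          (Φ F : ↥U → ℝ) x
            = (F : (Fin (n + 1) → ℝ) → ℝ)
                (Fin.snoc (x : Fin n → ℝ) (1 / (f : (Fin n → ℝ) → ℝ) (x : Fin n → ℝ)))) ∧
      Function.Surjective Φ ∧
      ∃ P : SmoothAlg (n + 1),
        (∀ y : Fin (n + 1) → ℝ,
            (P : (Fin (n + 1) → ℝ) → ℝ) y
              = y (Fin.last n) * (f : (Fin n → ℝ) → ℝ) (fun i => y i.castSucc) - 1) ∧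
        RingHom.ker Φ = Ideal.span {P} :=
  smoothOnAlg_iso_quotient_general n U f hchar

end
end
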